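/- Let Λ be a quantum channel from d_B×d_B to d_A×d_A matrices, let U_{k,l} = X^k Z^l on ℂ^{d_A} (X, Z the shift and clock unitaries), and define the channels Γ_{k,l}(·) = U_{k,l} Λ(·) U_{k,l}†. Then for every quantum state σ on ℂ^{d_A} ⊗ ℂ^{d_B} and every POVM {N_{k,l}}_{k,l=0}^{d_A−1} on ℂ^{d_A} ⊗ ℂ^{d_A} (each N_{k,l} positive semidefinite, Σ_{k,l} N_{k,l} = 1): (1/d_A²) Σ_{k,l} tr(N_{k,l} (id_{d_A} ⊗ Γ_{k,l})(σ)) ≤ ‖(id_{d_A} ⊗ Λ)(σ)‖_∞ ≤ 1, where ‖·‖_∞ is the operator (spectral) norm. -/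

import Mathlib

open scoped ComplexOrder Kronecker
open Matrix

noncomputable section

/-- Square complex matrices of size `d`. -/
abbrev Mat (d : ℕ) : Type := Matrix (Fin d) (Fin d) ℂ

/-- Square complex matrices on the bipartite space `ℂ^dA ⊗ ℂ^dB`. -/
abbrev BMat (dA dB : ℕ) : Type := Matrix (Fin dA × Fin dB) (Fin dA × Fin dB) ℂ

/-- A quantum state: a positive semidefinite matrix of unit trace. -/
def IsState {n : Type*} [Fintype n] (ρ : Matrix n n ℂ) : Prop :=
  ρ.PosSemidef ∧ ρ.trace = 1

/-- Trace norm `‖A‖₁ = tr √(Aᴴ A)`. -/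
noncomputable def traceNorm {n : Type*} [Fintype n] [DecidableEq n] (A : Matrix n n ℂ) : ℝ :=
  (((Matrix.posSemidef_conjTranspose_mul_self A).1.eigenvectorUnitary *
      Matrix.diagonal (((↑) : ℝ → ℂ) ∘ (Real.sqrt ·) ∘
        (Matrix.posSemidef_conjTranspose_mul_self A).1.eigenvalues) *
      (star (Matrix.posSemidef_conjTranspose_mul_self A).1.eigenvectorUnitary : Matrix n n ℂ)).trace).re

/-- Operator (spectral) norm of a square complex matrix. -/
noncomputable def opNorm {n : Type*} [Fintype n] [DecidableEq n] (A : Matrix n n ℂ) : ℝ :=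
  ‖LinearMap.toContinuousLinearMap (Matrix.toEuclideanLin A)‖

/-- The partial action `id_{dA} ⊗ Λ` of a map `Λ` on block matrices. -/
def idTensor {dA dB dC : ℕ} (Λ : Mat dB → Mat dC) (ρ : BMat dA dB) : BMat dA dC :=
  fun p q => Λ (fun i j => ρ (p.1, i) (q.1, j)) p.2 q.2

/-- `Λ` is `k`-positive: `id_k ⊗ Λ` preserves positive semidefiniteness. -/
def kPositive (k : ℕ) {dB dC : ℕ} (Λ : Mat dB → Mat dC) : Prop :=
  ∀ ρ : BMat k dB, ρ.PosSemidef → (idTensor Λ ρ).PosSemidef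

/-- Completely positive: `k`-positive for every `k`. -/
def CompletelyPositive {dB dC : ℕ} (Λ : Mat dB → Mat dC) : Prop :=
  ∀ k : ℕ, kPositive k Λ

/-- Trace-preserving map. -/
def TracePreserving {dB dC : ℕ} (Λ : Mat dB → Mat dC) : Prop :=
  ∀ X : Mat dB, (Λ X).trace = X.trace

/-- A quantum channel: completely positive and trace-preserving linear map. -/
def IsChannel {dB dC : ℕ} (Λ : Mat dB →ₗ[ℂ] Mat dC) : Prop :=
  CompletelyPositive (⇑Λ) ∧ TracePreserving (⇑Λ)

/-- Schmidt rank of a bipartite vector: the minimal number of product terms in a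
decomposition `ψ = Σ_t a_t ⊗ b_t`. -/
def SchmidtRank {dA dB : ℕ} (ψ : Fin dA × Fin dB → ℂ) : ℕ :=
  sInf {r : ℕ | ∃ (a : Fin r → Fin dA → ℂ) (b : Fin r → Fin dB → ℂ),
    ∀ i j, ψ (i, j) = ∑ t, a t i * b t j}

/-- The Schmidt number of `ρ` is at most `k`: there is a pure-state decomposition
`ρ = Σ_i p_i |ψ_i⟩⟨ψ_i|` with all Schmidt ranks at most `k`. -/
def SchmidtNumberLE {dA dB : ℕ} (ρ : BMat dA dB) (k : ℕ) : Prop :=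
  ∃ (n : ℕ) (p : Fin n → ℝ) (ψ : Fin n → (Fin dA × Fin dB → ℂ)),
    (∀ i, 0 ≤ p i) ∧ (∀ i, ∑ x, ‖ψ i x‖ ^ 2 = 1) ∧
    (∀ i, SchmidtRank (ψ i) ≤ k) ∧
    ρ = ∑ i, (p i : ℂ) • Matrix.vecMulVec (ψ i) (star (ψ i))

/-- The (generalized) Schmidt-number robustness `R_{S_k}`. -/
noncomputable def robustness {dA dB : ℕ} (k : ℕ) (ρ : BMat dA dB) : ℝ :=
  sInf {R : ℝ | 0 ≤ R ∧ ∃ σ τ : BMat dA dB,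
    IsState σ ∧ SchmidtNumberLE σ k ∧ IsState τ ∧
    ρ = ((1 + R : ℝ) : ℂ) • σ - (R : ℂ) • τ}

/-- Partial trace over the first tensor factor. -/
def ptraceFirst {dA dB : ℕ} (ρ : BMat dA dB) : Mat dB :=
  fun i j => ∑ a : Fin dA, ρ (a, i) (a, j)

/-- Partial trace over the second tensor factor. -/
def ptraceSecond {dA dB : ℕ} (ρ : BMat dA dB) : Mat dA :=
  fun a b => ∑ i : Fin dB, ρ (a, i) (b, i)

/-- Embed a `BMat dA d` as the top-left block (in the second factor) of a `BMat dA (d+1)`. -/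
def padSnd {dA d : ℕ} (M : BMat dA d) : BMat dA (d + 1) :=
  fun p q =>
    if h : (p.2 : ℕ) < d ∧ (q.2 : ℕ) < d then M (p.1, ⟨p.2, h.1⟩) (q.1, ⟨q.2, h.2⟩) else 0

/-- The shift unitary `X|n⟩ = |n+1 mod d⟩`. -/
def shiftMat (d : ℕ) : Mat d :=
  fun i j => if (i : ℕ) = ((j : ℕ) + 1) % d then 1 else 0

/-- The clock unitary `Z|n⟩ = e^{2πin/d}|n⟩`. -/
def clockMat (d : ℕ) : Mat d :=
  fun i j => if i = j then Complex.exp (2 * Real.pi * Complex.I * (i : ℕ) / d) else 0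

/-- The Heisenberg-Weyl unitary `X^k Z^l`. -/
def heisenbergU (d k l : ℕ) : Mat d := shiftMat d ^ k * clockMat d ^ l

/-- The maximally entangled unit vector `|φ⁺⟩ = (1/√d) Σ_n |n⟩ ⊗ |n⟩`. -/
def phiPlus (d : ℕ) : Fin d × Fin d → ℂ :=
  fun p => if p.1 = p.2 then ((1 / Real.sqrt d : ℝ) : ℂ) else 0

/-- The projection `|φ⁺⟩⟨φ⁺|`. -/
def phiProj (d : ℕ) : BMat d d := Matrix.vecMulVec (phiPlus d) (star (phiPlus d))

/-- The Bell basis projection `M_{k,l} = (1 ⊗ X^k Z^l)|φ⁺⟩⟨φ⁺|(1 ⊗ X^k Z^l)ᴴ`. -/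
def bellProj (d k l : ℕ) : BMat d d :=
  ((1 : Mat d) ⊗ₖ heisenbergU d k l) * phiProj d * ((1 : Mat d) ⊗ₖ heisenbergU d k l)ᴴ

/-- The canonical inclusion isometry `ℂ^d → ℂ^D`. -/
def inclMat (d D : ℕ) : Matrix (Fin D) (Fin d) ℂ :=
  fun i j => if (i : ℕ) = (j : ℕ) then 1 else 0

/-- Optimal guessing probability for the discrimination of the (sub)channels `Λ i`
applied with a priori probabilities `p i`, using the input state `ρ`. -/
noncomputable def pguess {dA dB D N : ℕ} (p : Fin N → ℝ) (Λ : Fin N → (Mat dB → Mat D))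
    (ρ : BMat dA dB) : ℝ :=
  sSup {x : ℝ | ∃ M : Fin N → Matrix (Fin dA × Fin D) (Fin dA × Fin D) ℂ,
    (∀ i, (M i).PosSemidef) ∧ (∑ i, M i) = 1 ∧
    x = ∑ i, p i * ((M i * idTensor (Λ i) ρ).trace).re}

/-- Optimal guessing probability over all input states of Schmidt number at most `k`. -/
noncomputable def pguessK (dA : ℕ) {dB D N : ℕ} (k : ℕ) (p : Fin N → ℝ)
    (Λ : Fin N → (Mat dB → Mat D)) : ℝ :=
  sSup {x : ℝ | ∃ σ : BMat dA dB, IsState σ ∧ SchmidtNumberLE σ k ∧ x = pguess p Λ σ}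

end


/-!
With `ρ = (id ⊗ Λ)(σ)`, the shifted channel gives `(id ⊗ Γ_{k,l})(σ) = V ρ Vᴴ` for the unitary
`V = 1 ⊗ U_{k,l}`, which has the same operator norm as `ρ`. For positive `M` and `ρ`, writing
`M = Bᴴ B` and using `ρ ≤ ‖ρ‖ • 1` gives `tr (M ρ) ≤ ‖ρ‖ tr M`; summing over the POVM yields
`‖ρ‖ tr 1 = d_A² ‖ρ‖`. Finally `‖ρ‖` is the largest eigenvalue of the state `ρ`, hence at most
the sum of all of them, `tr ρ = 1`.
-/

open scoped Matrix.Norms.L2Operator MatrixOrder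

lemma opNorm_eq_l2_opNorm {n : Type*} [Fintype n] [DecidableEq n] (A : Matrix n n ℂ) :
    opNorm A = ‖A‖ := rfl

namespace Matrix

variable {n : Type*} [Fintype n] [DecidableEq n]

lemma PosSemidef.l2_opNorm_le_re_trace {ρ : Matrix n n ℂ} (hρ : ρ.PosSemidef) :
    ‖ρ‖ ≤ ρ.trace.re := by
  rw [hρ.isHermitian.trace_eq_sum_eigenvalues, Complex.re_sum]
  conv_lhs => rw [hρ.isHermitian.spectral_theorem, Unitary.conjStarAlgAut_apply,
    ← Unitary.coe_star, CStarRing.norm_mul_coe_unitary, CStarRing.norm_coe_unitary_mul,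
    l2_opNorm_diagonal]
  refine (pi_norm_le_iff_of_nonneg
    (Finset.sum_nonneg fun j _ => by simpa using hρ.eigenvalues_nonneg j)).mpr fun i => ?_
  simpa [abs_of_nonneg (hρ.eigenvalues_nonneg i)] using
    Finset.single_le_sum (fun j _ => hρ.eigenvalues_nonneg j) (Finset.mem_univ i)

lemma PosSemidef.trace_mul_le_norm_mul_trace {M ρ : Matrix n n ℂ} (hM : M.PosSemidef)
    (hρ : ρ.PosSemidef) : (M * ρ).trace ≤ ‖ρ‖ * M.trace := by
  obtain ⟨B, rfl⟩ := CStarAlgebra.nonneg_iff_eq_star_mul_self.mp hM.nonneg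
  have hconj : B * ρ * star B ≤ B * algebraMap ℝ _ ‖ρ‖ * star B :=
    star_right_conjugate_le_conjugate (IsSelfAdjoint.le_algebraMap_norm_self hρ.isHermitian) B
  have htrace := (le_iff.mp hconj).trace_nonneg
  rwa [trace_sub, sub_nonneg, Algebra.algebraMap_eq_smul_one, mul_smul_comm, mul_one,
    smul_mul_assoc, trace_smul, trace_mul_comm, trace_mul_comm B, Complex.real_smul,
    ← Matrix.mul_assoc] at htrace

lemma PosSemidef.trace_mul_unitary_conj_le {M ρ V : Matrix n n ℂ} (hM : M.PosSemidef)
    (hρ : ρ.PosSemidef) (hV : V ∈ unitary (Matrix n n ℂ)) :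
    (M * (V * ρ * Vᴴ)).trace ≤ ‖ρ‖ * M.trace := by
  have htrace := hM.trace_mul_le_norm_mul_trace (hρ.mul_mul_conjTranspose_same V)
  rwa [← star_eq_conjTranspose, CStarRing.norm_mul_mem_unitary _ (Unitary.star_mem hV),
    CStarRing.norm_mem_unitary_mul _ hV] at htrace

lemma diagonal_mem_unitary {R : Type*} [CommRing R] [StarRing R] {v : n → R}
    (hv : ∀ i, v i ∈ unitary R) : diagonal v ∈ unitary (Matrix n n R) := by
  rw [Unitary.mem_iff, star_eq_conjTranspose, diagonal_conjTranspose, diagonal_mul_diagonal,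
    diagonal_mul_diagonal, ← diagonal_one]
  exact ⟨congrArg diagonal (funext fun i => Unitary.star_mul_self_of_mem (hv i)),
    congrArg diagonal (funext fun i => Unitary.mul_star_self_of_mem (hv i))⟩

lemma permMatrix_mem_unitary {R : Type*} [Semiring R] [StarRing R] (σ : Equiv.Perm n) :
    σ.permMatrix R ∈ unitary (Matrix n n R) := by
  rw [Unitary.mem_iff, star_eq_conjTranspose, conjTranspose_permMatrix, ← permMatrix_mul,
    ← permMatrix_mul, inv_mul_cancel, mul_inv_cancel, permMatrix_one]
  exact ⟨rfl, rfl⟩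

end Matrix

lemma Complex.exp_ofReal_mul_I_mem_unitary (x : ℝ) :
    Complex.exp (x * Complex.I) ∈ unitary ℂ := by
  rw [Unitary.mem_iff_star_mul_self, Complex.star_def, Complex.conj_mul',
    Complex.norm_exp_ofReal_mul_I]
  simp

lemma shiftMat_eq_permMatrix (d : ℕ) :
    shiftMat d = Equiv.Perm.permMatrix ℂ (finRotate d).symm := by
  ext i j
  have : NeZero d := i.neZero
  have hval : ((j + 1 : Fin d) : ℕ) = ((j : ℕ) + 1) % d := by
    rw [Fin.val_add, Fin.val_one', Nat.add_mod_mod]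
  simp only [Equiv.Perm.permMatrix, PEquiv.toMatrix_apply, Equiv.toPEquiv_apply, Option.mem_def,
    Option.some.injEq, Equiv.symm_apply_eq, finRotate_apply, shiftMat, ← hval, Fin.val_inj]

lemma clockMat_eq_diagonal (d : ℕ) :
    clockMat d =
      diagonal fun i : Fin d => Complex.exp ((2 * Real.pi * (i : ℕ) / d : ℝ) * Complex.I) := by
  ext i j
  simp only [clockMat, diagonal_apply]
  push_cast
  ring_nf

lemma heisenbergU_mem_unitary (d k l : ℕ) : heisenbergU d k l ∈ unitary (Mat d) := by
  have hX : shiftMat d ∈ unitary (Mat d) := shiftMat_eq_permMatrix d ▸ permMatrix_mem_unitary _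
  have hZ : clockMat d ∈ unitary (Mat d) := clockMat_eq_diagonal d ▸
    diagonal_mem_unitary fun _ => Complex.exp_ofReal_mul_I_mem_unitary _
  exact mul_mem (pow_mem hX k) (pow_mem hZ l)

lemma trace_idTensor {dA dB dC : ℕ} {Λ : Mat dB → Mat dC} (hΛ : TracePreserving Λ)
    (σ : BMat dA dB) : (idTensor Λ σ).trace = σ.trace := by
  simp only [trace, Fintype.sum_prod_type, diag_apply]
  exact Finset.sum_congr rfl fun a _ => hΛ fun i j => σ (a, i) (a, j)

lemma IsChannel.isState_idTensor {dA dB dC : ℕ} {Λ : Mat dB →ₗ[ℂ] Mat dC}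
    (hΛ : IsChannel Λ) {σ : BMat dA dB} (hσ : IsState σ) : IsState (idTensor Λ σ) :=
  ⟨hΛ.1 dA σ hσ.1, (trace_idTensor hΛ.2 σ).trans hσ.2⟩

lemma idTensor_conj {dA dB dC : ℕ} (Λ : Mat dB → Mat dC) (U : Mat dC) (σ : BMat dA dB) :
    idTensor (fun X => U * Λ X * Uᴴ) σ
      = ((1 : Mat dA) ⊗ₖ U) * idTensor Λ σ * ((1 : Mat dA) ⊗ₖ U)ᴴ := by
  ext ⟨a, i⟩ ⟨b, j⟩
  simp [idTensor, conjTranspose_kronecker, mul_apply, Fintype.sum_prod_type, one_apply]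

/-- for any POVM, the average success probability on the shifted channels
`Γ_{k,l} = U_{k,l} Λ(·) U_{k,l}ᴴ` with input `σ` is bounded by `‖(id ⊗ Λ)(σ)‖_∞ ≤ 1`. -/
theorem stmt11 {dA dB : ℕ} (Λ : Mat dB →ₗ[ℂ] Mat dA) (hΛ : IsChannel Λ)
    (σ : BMat dA dB) (hσ : IsState σ)
    (N : Fin dA → Fin dA → BMat dA dA)
    (hNpos : ∀ k l, (N k l).PosSemidef) (hNsum : (∑ k : Fin dA, ∑ l : Fin dA, N k l) = 1) :
    (1 / (dA : ℂ) ^ 2) * ∑ k : Fin dA, ∑ l : Fin dA,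
        (N k l *
          idTensor (fun X => heisenbergU dA k l * Λ X * (heisenbergU dA k l)ᴴ) σ).trace
      ≤ ((opNorm (idTensor (⇑Λ) σ) : ℝ) : ℂ) ∧ opNorm (idTensor (⇑Λ) σ) ≤ 1 := by
  rw [opNorm_eq_l2_opNorm]
  set ρ := idTensor (⇑Λ) σ
  obtain ⟨hρ, hρtr⟩ := hΛ.isState_idTensor hσ
  refine ⟨?_, by simpa [hρtr] using hρ.l2_opNorm_le_re_trace⟩
  have hterm (k l : Fin dA) : (N k l *
      idTensor (fun X => heisenbergU dA k l * Λ X * (heisenbergU dA k l)ᴴ) σ).trace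
        ≤ ‖ρ‖ * (N k l).trace := by
    rw [idTensor_conj]
    exact (hNpos k l).trace_mul_unitary_conj_le hρ
      (kronecker_mem_unitary (one_mem _) (heisenbergU_mem_unitary dA k l))
  have htotal :
      ∑ k : Fin dA, ∑ l : Fin dA, ‖ρ‖ * (N k l).trace = ‖ρ‖ * (dA : ℂ) ^ 2 := by
    simp_rw [← Finset.mul_sum, ← trace_sum, hNsum, trace_one]
    simp [sq]
  calc _ ≤ 1 / (dA : ℂ) ^ 2 * (‖ρ‖ * (dA : ℂ) ^ 2) := by
        rw [← htotal]
        gcongr with k _ l _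
        exact hterm k l
    _ ≤ ‖ρ‖ := by
        rcases eq_or_ne dA 0 with rfl | hd
        · simp
        · exact le_of_eq (by field_simp)
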